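/- arXiv:1004.0887 — 4 statements merged into one kernel-verified Lean document; each statement's English description precedes it below -/
import Mathlib

section
/- Pruning update: with S_{t,t'} = {μ : h_{t,t'}(μ) = H_t(μ)} (the set of μ for which a last change-point at t' is optimal at time t) and I_{t,t'} = {μ : h_{t,t'}(μ) ≤ C_t}, one has S_{t+1,t'} = S_{t,t'} ∩ I_{t,t'} for all t with t > t' ≥ k. -/
/-- Candidate cost `h_{t,s}(μ) = C_s + ∑_{i=s+1}^{t} γ(Y_i)(μ)`. -/
noncomputable def candCost {A : Type*} (Y : ℕ → A) (γ : A → ℝ → ℝ) (C : ℕ → ℝ)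
    (t s : ℕ) (μ : ℝ) : ℝ :=
  C s + ∑ i ∈ Finset.Ioc s t, γ (Y i) μ

/-- `H_t(μ) = min_{k ≤ s < t} h_{t,s}(μ)`. -/
noncomputable def Hfun {A : Type*} (Y : ℕ → A) (γ : A → ℝ → ℝ) (C : ℕ → ℝ)
    (k t : ℕ) (μ : ℝ) : ℝ :=
  sInf {x : ℝ | ∃ s : ℕ, k ≤ s ∧ s < t ∧ x = candCost Y γ C t s μ}

/-- `S_{t,t'}`: the set of `μ` for which a last change-point at `t'` is optimal at time `t`. -/
noncomputable def Sset {A : Type*} (Y : ℕ → A) (γ : A → ℝ → ℝ) (C : ℕ → ℝ)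
    (k t t' : ℕ) : Set ℝ :=
  {μ : ℝ | candCost Y γ C t t' μ = Hfun Y γ C k t μ}

/-- `I_{t,t'}`: the set of `μ` where candidate `t'` beats the candidate entering at `t`. -/
noncomputable def Iset {A : Type*} (Y : ℕ → A) (γ : A → ℝ → ℝ) (C : ℕ → ℝ)
    (t t' : ℕ) : Set ℝ :=
  {μ : ℝ | candCost Y γ C t t' μ ≤ C t}

/-
The minimum over `k ≤ s < t + 1` splits into the old candidates, whose costs all move by the
same amount `γ(Y_{t+1})(μ)`, and the new candidate `s = t`, whose cost is `C_t + γ(Y_{t+1})(μ)`.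
So `t'` stays optimal iff it was optimal at time `t` and its cost at time `t` is at most `C_t`.
-/

theorem eq_csInf_iff_forall_le {α : Type*} [ConditionallyCompleteLinearOrder α] {s : Set α}
    {a : α} (hbdd : BddBelow s) (ha : a ∈ s) : a = sInf s ↔ ∀ x ∈ s, a ≤ x :=
  ⟨fun h _ hx => h ▸ csInf_le hbdd hx, fun h => (IsLeast.csInf_eq ⟨ha, h⟩).symm⟩

section

variable {A : Type*} (Y : ℕ → A) (γ : A → ℝ → ℝ) (C : ℕ → ℝ)

theorem candCost_self (t : ℕ) (μ : ℝ) : candCost Y γ C t t μ = C t := by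
  simp [candCost]

theorem candCost_succ {t s : ℕ} (h : s ≤ t) (μ : ℝ) :
    candCost Y γ C (t + 1) s μ = candCost Y γ C t s μ + γ (Y (t + 1)) μ := by
  rw [candCost, candCost, Finset.sum_Ioc_succ_top h, add_assoc]

variable {Y γ C}

theorem mem_Sset_iff {k t t' : ℕ} (hk : k ≤ t') (ht : t' < t) (μ : ℝ) :
    μ ∈ Sset Y γ C k t t' ↔
      ∀ s, k ≤ s → s < t → candCost Y γ C t t' μ ≤ candCost Y γ C t s μ := by
  have hfin : {x : ℝ | ∃ s : ℕ, k ≤ s ∧ s < t ∧ x = candCost Y γ C t s μ}.Finite :=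
    ((Set.finite_Ico k t).image fun s => candCost Y γ C t s μ).subset
      fun _ ⟨s, hks, hst, hx⟩ => ⟨s, ⟨hks, hst⟩, hx.symm⟩
  rw [Sset, Set.mem_ofPred_eq, Hfun, eq_csInf_iff_forall_le hfin.bddBelow ⟨t', hk, ht, rfl⟩]
  constructor
  · exact fun h s hks hst => h _ ⟨s, hks, hst, rfl⟩
  · rintro h _ ⟨s, hks, hst, rfl⟩
    exact h s hks hst

end

/-- Pruning update: `S_{t+1,t'} = S_{t,t'} ∩ I_{t,t'}` for `t > t' ≥ k`. -/
theorem pruning_update {A : Type*} (Y : ℕ → A) (γ : A → ℝ → ℝ) (C : ℕ → ℝ)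
    (k t t' : ℕ) (hk : k ≤ t') (ht : t' < t) :
    Sset Y γ C k (t + 1) t' = Sset Y γ C k t t' ∩ Iset Y γ C t t' := by
  ext μ
  rw [Set.mem_inter_iff, mem_Sset_iff hk (ht.trans t.lt_succ_self), mem_Sset_iff hk ht, Iset,
    Set.mem_ofPred_eq]
  have hshift : ∀ s ≤ t, candCost Y γ C t t' μ ≤ candCost Y γ C t s μ ↔
      candCost Y γ C (t + 1) t' μ ≤ candCost Y γ C (t + 1) s μ := fun s hs => by
    rw [candCost_succ Y γ C ht.le, candCost_succ Y γ C hs, add_le_add_iff_right]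
  constructor
  · intro h
    refine ⟨fun s hks hst => (hshift s hst.le).2 (h s hks (hst.trans t.lt_succ_self)), ?_⟩
    rw [← candCost_self Y γ C t μ, hshift t le_rfl]
    exact h t (hk.trans ht.le) t.lt_succ_self
  · rintro ⟨hold, hnew⟩ s hks hst
    rcases (Nat.lt_succ_iff.mp hst).lt_or_eq with hst | rfl
    · exact (hshift s hst.le).1 (hold s hks hst)
    · rwa [← hshift s le_rfl, candCost_self]
end

section
/- Let f₁, ..., f_n : ℝ → ℝ be convex functions and u₁, ..., u_n ∈ ℝ, and define B(μ) = min_{1 ≤ t ≤ n} (u_t + ∑_{j=t+1}^{n} f_j(μ)) (with the empty sum equal to 0). Then there exists a finite partition of ℝ into intervals such that on each interval, B coincides with one of the functions μ ↦ u_t + ∑_{j=t+1}^{n} f_j(μ). -/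
/-! For `s < t` the difference `branch s - branch t = u s - u t + ∑_{s < j ≤ t} f j` is convex, so
`{μ | branch s μ < branch t μ}` is an interval. Finitely many intervals cut `ℝ` into finitely many
intervals, on each of which the outcome of every such comparison is constant. On such a piece,
the largest index minimising the branches at one point therefore minimises them everywhere:
smaller indices stay weakly worse and larger ones stay strictly worse. -/

/-- Branch function `b_t(μ) = u_t + ∑_{j=t+1}^{n} f_j(μ)` of a `𝓑_n` function. -/
noncomputable def branch (n : ℕ) (u : ℕ → ℝ) (f : ℕ → ℝ → ℝ) (t : ℕ) (μ : ℝ) : ℝ :=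
  u t + ∑ j ∈ Finset.Ioc t n, f j μ

theorem ConvexOn.finset_sum {𝕜 E β ι : Type*} [Semiring 𝕜] [PartialOrder 𝕜] [AddCommMonoid E]
    [AddCommMonoid β] [PartialOrder β] [IsOrderedAddMonoid β] [SMul 𝕜 E] [Module 𝕜 β]
    {s : Set E} (hs : Convex 𝕜 s) {t : Finset ι} {f : ι → E → β}
    (hf : ∀ i ∈ t, ConvexOn 𝕜 s (f i)) : ConvexOn 𝕜 s fun x => ∑ i ∈ t, f i x := by
  classical
  induction t using Finset.induction_on with
  | empty => simpa using convexOn_const 0 hs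
  | insert a t ha ih =>
    simp_rw [Finset.sum_insert ha]
    exact (hf a (Finset.mem_insert_self a t)).add
      (ih fun i hi => hf i (Finset.mem_insert_of_mem hi))

theorem Finset.exists_greatest_argmin {α β : Type*} [LinearOrder α] [LinearOrder β]
    {K : Finset α} (hK : K.Nonempty) (g : α → β) :
    ∃ t ∈ K, ∀ s ∈ K, g t ≤ g s ∧ (t < s → g t < g s) := by
  -- minimise `g`, breaking ties in favour of larger indices
  obtain ⟨t, ht, hmin⟩ := K.exists_min_image (fun s => toLex (g s, OrderDual.toDual s)) hK
  refine ⟨t, ht, fun s hs => ?_⟩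
  have hts := hmin s hs
  simp only [Prod.Lex.toLex_le_toLex, OrderDual.toDual_le_toDual] at hts
  exact ⟨hts.elim le_of_lt fun h => h.1.le, fun hlt => hts.resolve_right fun h => h.2.not_gt hlt⟩

theorem greatest_argmin_le_of_lt_iff {ι β γ : Type*} [LinearOrder ι] [LinearOrder β]
    [LinearOrder γ] {K : Finset ι} {g : ι → β} {h : ι → γ} {t s : ι} (ht : t ∈ K) (hs : s ∈ K)
    (hmin : ∀ s ∈ K, g t ≤ g s ∧ (t < s → g t < g s))
    (hlt : ∀ s ∈ K, ∀ r ∈ K, s < r → (h s < h r ↔ g s < g r)) : h t ≤ h s := by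
  rcases lt_trichotomy s t with hst | rfl | hts
  · exact not_lt.mp fun hst' => ((hlt s hs t ht hst).mp hst').not_ge (hmin s hs).1
  · exact le_rfl
  · exact ((hlt t ht s hs hts).mpr ((hmin s hs).2 hts)).le

section Partition

open Set

variable {α : Type*}

open Classical in
noncomputable def relPos [LinearOrder α] (C : Set α) (x : α) : Ordering :=
  if x ∈ C then .eq else if x ∈ lowerBounds C then .lt else .gt

theorem exists_finset_partition_fibers {β : Type*} [Finite β] (g : α → β) :
    ∃ P : Finset (Set α), (P : Set (Set α)).PairwiseDisjoint id ∧ ⋃₀ (P : Set (Set α)) = univ ∧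
      ∀ I ∈ P, ∃ x, I = {y | g y = g x} := by
  classical
  refine ⟨(toFinite (range g)).toFinset.image fun y => g ⁻¹' {y}, ?_, ?_, ?_⟩
  · rintro _ hI _ hJ hIJ
    obtain ⟨_, -, rfl⟩ := Finset.mem_coe.mp hI |> Finset.mem_image.mp
    obtain ⟨_, -, rfl⟩ := Finset.mem_coe.mp hJ |> Finset.mem_image.mp
    refine disjoint_left.mpr fun x hy hz => hIJ ?_
    rw [← mem_singleton_iff.mp hy, ← mem_singleton_iff.mp hz]
  · refine sUnion_eq_univ_iff.mpr fun x => ⟨g ⁻¹' {g x}, ?_, rfl⟩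
    simp
  · intro I hI
    obtain ⟨_, hy, rfl⟩ := Finset.mem_image.mp hI
    obtain ⟨x, rfl⟩ := (Finite.mem_toFinset _).mp hy
    exact ⟨x, rfl⟩

variable [LinearOrder α] {C : Set α}

theorem relPos_eq_lt_iff {x : α} : relPos C x = .lt ↔ x ∉ C ∧ x ∈ lowerBounds C := by
  unfold relPos
  split_ifs <;> simp_all

theorem relPos_eq_eq_iff {x : α} : relPos C x = .eq ↔ x ∈ C := by
  unfold relPos
  split_ifs <;> simp_all

theorem relPos_eq_gt_iff {x : α} : relPos C x = .gt ↔ x ∉ C ∧ x ∉ lowerBounds C := by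
  unfold relPos
  split_ifs <;> simp_all

theorem Set.OrdConnected.setOf_relPos_eq (hC : C.OrdConnected) (o : Ordering) :
    {x | relPos C x = o}.OrdConnected := by
  refine ⟨fun x hx z hz w hw => ?_⟩
  cases o
  · rw [mem_ofPred_eq, relPos_eq_lt_iff] at hx hz ⊢
    have hwz : ∀ c ∈ C, w ≤ c := fun c hc => hw.2.trans (hz.2 hc)
    exact ⟨fun hwC => hz.1 (le_antisymm (hz.2 hwC) hw.2 ▸ hwC), hwz⟩
  · rw [mem_ofPred_eq, relPos_eq_eq_iff] at hx hz ⊢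
    exact hC.out hx hz hw
  · rw [mem_ofPred_eq, relPos_eq_gt_iff] at hx hz ⊢
    obtain ⟨c, hc, hcx⟩ : ∃ c ∈ C, c < x := by simpa [lowerBounds] using hx.2
    refine ⟨fun hwC => hx.1 (hC.out hc hwC ⟨hcx.le, hw.1⟩), fun hw' => ?_⟩
    exact (hcx.trans_le hw.1).not_ge (hw' hc)

theorem exists_ordConnected_partition_refining (S : Finset (Set α))
    (hS : ∀ C ∈ S, C.OrdConnected) :
    ∃ P : Finset (Set α), (∀ I ∈ P, I.OrdConnected) ∧
      (P : Set (Set α)).PairwiseDisjoint id ∧ ⋃₀ (P : Set (Set α)) = univ ∧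
      ∀ I ∈ P, ∃ x ∈ I, ∀ y ∈ I, ∀ C ∈ S, y ∈ C ↔ x ∈ C := by
  obtain ⟨P, hdisj, hcover, hfiber⟩ :=
    exists_finset_partition_fibers fun x (C : S) => relPos (C : Set α) x
  refine ⟨P, fun I hI => ?_, hdisj, hcover, fun I hI => ?_⟩
  · obtain ⟨x, rfl⟩ := hfiber I hI
    simp only [funext_iff, ofPred_forall]
    exact ordConnected_iInter fun C => (hS C C.2).setOf_relPos_eq _
  · obtain ⟨x, rfl⟩ := hfiber I hI
    refine ⟨x, rfl, fun y hy C hC => ?_⟩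
    rw [← relPos_eq_eq_iff, ← relPos_eq_eq_iff, congrFun hy ⟨C, hC⟩]

end Partition

section Branch

open Finset

variable {n : ℕ} {u : ℕ → ℝ} {f : ℕ → ℝ → ℝ} {s t : ℕ}

theorem branch_sub_branch (hst : s ≤ t) (htn : t ≤ n) (μ : ℝ) :
    branch n u f s μ - branch n u f t μ = u s - u t + ∑ j ∈ Ioc s t, f j μ := by
  rw [branch, branch, ← sum_Ioc_consecutive _ hst htn]
  ring

theorem convex_setOf_branch_lt (hst : s ≤ t) (htn : t ≤ n)
    (hf : ∀ j ∈ Ioc s t, ConvexOn ℝ Set.univ (f j)) :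
    Convex ℝ {μ | branch n u f s μ < branch n u f t μ} := by
  have hdiff : ConvexOn ℝ Set.univ fun μ => branch n u f s μ - branch n u f t μ := by
    simp_rw [branch_sub_branch hst htn]
    exact (convexOn_const _ convex_univ).add (ConvexOn.finset_sum convex_univ hf)
  simpa only [Set.mem_univ, true_and, sub_neg] using hdiff.convex_lt 0

end Branch

/-- Every `B ∈ 𝓑_n` (a pointwise minimum of `n` telescoping branches with convex
increments) admits a finite partition of `ℝ` into intervals on each of which `B`
coincides with a single branch. -/
theorem exists_decomposition (n : ℕ) (hn : 1 ≤ n) (u : ℕ → ℝ) (f : ℕ → ℝ → ℝ)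
    (hconv : ∀ j : ℕ, ConvexOn ℝ Set.univ (f j)) :
    ∃ P : Finset (Set ℝ),
      (∀ I ∈ P, Convex ℝ I) ∧
      ((↑P : Set (Set ℝ)).PairwiseDisjoint id) ∧
      ⋃₀ (↑P : Set (Set ℝ)) = Set.univ ∧
      ∀ I ∈ P, ∃ t : ℕ, 1 ≤ t ∧ t ≤ n ∧ ∀ μ ∈ I,
        sInf {x : ℝ | ∃ s : ℕ, 1 ≤ s ∧ s ≤ n ∧ x = branch n u f s μ} =
          branch n u f t μ := by
  set K := Finset.Icc 1 n
  set pairs := (K ×ˢ K).filter fun p => p.1 < p.2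
  set C : ℕ × ℕ → Set ℝ := fun p => {μ | branch n u f p.1 μ < branch n u f p.2 μ}
  obtain ⟨P, hord, hdisj, hcover, hconst⟩ := exists_ordConnected_partition_refining
    (pairs.image C) fun D hD => by
      obtain ⟨⟨s, t⟩, hst, rfl⟩ := Finset.mem_image.mp hD
      simp only [pairs, K, Finset.mem_filter, Finset.mem_product, Finset.mem_Icc] at hst
      exact (convex_setOf_branch_lt hst.2.le hst.1.2.2 fun j _ => hconv j).ordConnected
  refine ⟨P, fun I hI => (hord I hI).convex, hdisj, hcover, fun I hI => ?_⟩
  obtain ⟨μ₀, -, hsame⟩ := hconst I hI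
  obtain ⟨t, ht, hmin⟩ :=
    Finset.exists_greatest_argmin ⟨1, Finset.mem_Icc.mpr ⟨le_rfl, hn⟩⟩ fun s => branch n u f s μ₀
  obtain ⟨ht1, htn⟩ := Finset.mem_Icc.mp ht
  refine ⟨t, ht1, htn, fun μ hμ => IsLeast.csInf_eq ⟨⟨t, ht1, htn, rfl⟩, ?_⟩⟩
  rintro _ ⟨s, hs1, hsn, rfl⟩
  refine greatest_argmin_le_of_lt_iff (g := fun s => branch n u f s μ₀)
    (h := fun s => branch n u f s μ) ht (Finset.mem_Icc.mpr ⟨hs1, hsn⟩) hmin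
    fun s hs r hr hsr => hsame μ hμ (C (s, r)) (Finset.mem_image_of_mem C ?_)
  exact Finset.mem_filter.mpr ⟨Finset.mem_product.mpr ⟨hs, hr⟩, hsr⟩
end

section
/- Main counting theorem: let f₁, ..., f_n : ℝ → ℝ be convex and u₁, ..., u_n ∈ ℝ, and define the branch functions b_t(μ) = u_t + ∑_{j=t+1}^{n} f_j(μ) for t = 1, ..., n and B(μ) = min_t b_t(μ). Then ℝ can be partitioned into at most 2n - 1 intervals such that on each interval B coincides with a single branch b_t. Equivalently, the order of B is at most 2·rank(B) − 1. -/
/-!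
For `s ≤ t` the difference `b_s - b_t = u_s - u_t + ∑_{j=s+1}^{t} f_j` is convex, so the region
where the branch with the least index `a` is minimal is an interval `J`. Off `J` the minimum is
attained among the remaining branches. Inserting an interval into an interval partition cuts
at most one piece in two, which adds at most two pieces, and induction on the number of branches
gives the bound `2n - 1`.
-/

open Set

section LinearOrder

variable {α : Type*} [LinearOrder α]

theorem Set.OrdConnected.diff_of_mem_of_notMem {I J : Set α} (hI : I.OrdConnected)
    (hJ : J.OrdConnected) {x : α} (hxJ : x ∈ J) (hxI : x ∉ I) : (I \ J).OrdConnected := by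
  refine ⟨fun y hy z hz w hw => ⟨hI.out hy.1 hz.1 hw, fun hwJ => ?_⟩⟩
  rcases lt_or_ge x y with hxy | hyx
  · exact hy.2 (hJ.out hxJ hwJ ⟨hxy.le, hw.1⟩)
  rcases lt_or_ge z x with hzx | hxz
  · exact hz.2 (hJ.out hwJ hxJ ⟨hw.2, hzx.le⟩)
  · exact hxI (hI.out hy.1 hz.1 ⟨hyx, hxz⟩)

structure IsIntervalPartition (P : Finset (Set α)) (S : Set α) : Prop where
  ordConnected : ∀ I ∈ P, I.OrdConnected
  pairwiseDisjoint : (P : Set (Set α)).PairwiseDisjoint id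
  sUnion_eq : ⋃₀ (P : Set (Set α)) = S

namespace IsIntervalPartition

variable {P : Finset (Set α)} {S J : Set α}

theorem subset_of_mem (hP : IsIntervalPartition P S) {I : Set α} (hI : I ∈ P) : I ⊆ S :=
  hP.sUnion_eq ▸ subset_sUnion_of_mem hI

open Classical in
theorem erase (hP : IsIntervalPartition P S) {I : Set α} (hI : I ∈ P) :
    IsIntervalPartition (P.erase I) (S \ I) where
  ordConnected K hK := hP.ordConnected K (Finset.mem_of_mem_erase hK)
  pairwiseDisjoint := hP.pairwiseDisjoint.subset (by simp)
  sUnion_eq := by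
    ext μ
    simp only [mem_sUnion, Finset.coe_erase, mem_sdiff, mem_singleton_iff, Finset.mem_coe]
    constructor
    · rintro ⟨K, ⟨hK, hKI⟩, hμK⟩
      exact ⟨hP.subset_of_mem hK hμK,
        fun hμI => hKI (hP.pairwiseDisjoint.elim_set hK hI μ hμK hμI)⟩
    · rintro ⟨hμS, hμI⟩
      obtain ⟨K, hK, hμK⟩ := mem_sUnion.1 (hP.sUnion_eq ▸ hμS)
      exact ⟨K, ⟨hK, fun hKI => hμI (hKI ▸ hμK)⟩, hμK⟩

open Classical in
theorem insert (hP : IsIntervalPartition P S) (hJ : J.OrdConnected) (hSJ : Disjoint S J) :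
    IsIntervalPartition (insert J P) (S ∪ J) where
  ordConnected := Finset.forall_mem_insert _ _ _ |>.2 ⟨hJ, hP.ordConnected⟩
  pairwiseDisjoint := by
    rw [Finset.coe_insert]
    exact hP.pairwiseDisjoint.insert fun K hK _ => (hSJ.mono_left (hP.subset_of_mem hK)).symm
  sUnion_eq := by rw [Finset.coe_insert, sUnion_insert, hP.sUnion_eq, union_comm]

open Classical in
theorem image_diff (hP : IsIntervalPartition P S) (hJ : J.OrdConnected)
    (hPJ : ∀ I ∈ P, ∃ x ∈ J, x ∉ I) : IsIntervalPartition (P.image (· \ J)) (S \ J) where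
  ordConnected := Finset.forall_mem_image.2 fun I hI =>
    let ⟨_, hxJ, hxI⟩ := hPJ I hI
    (hP.ordConnected I hI).diff_of_mem_of_notMem hJ hxJ hxI
  pairwiseDisjoint := by
    rw [Finset.coe_image]
    exact hP.pairwiseDisjoint.image_of_le fun I => sdiff_subset
  sUnion_eq := by
    rw [Finset.coe_image, sUnion_image, ← hP.sUnion_eq, sUnion_eq_biUnion]
    simp only [iUnion_sdiff]

theorem exists_puncture (hP : IsIntervalPartition P univ) (x : α) :
    ∃ P₀ : Finset (Set α), IsIntervalPartition P₀ {x}ᶜ ∧ P₀.card ≤ P.card + 1 ∧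
      ∀ K ∈ P₀, ∃ I ∈ P, K ⊆ I := by
  classical
  obtain ⟨I, hI, hxI⟩ := sUnion_eq_univ_iff.1 hP.sUnion_eq x
  have hIx := hP.ordConnected I hI
  have hright := (hP.erase hI).insert (hIx.inter (ordConnected_Ioi (a := x)))
    (disjoint_sdiff_left.mono_right inter_subset_left)
  have hcut := hright.insert (hIx.inter (ordConnected_Iio (a := x))) <|
    disjoint_union_left.2 ⟨disjoint_sdiff_left.mono_right inter_subset_left,
      Ioi_disjoint_Iio_same.mono inter_subset_right inter_subset_right⟩
  have hS : (univ \ I ∪ I ∩ Ioi x) ∪ I ∩ Iio x = {x}ᶜ := by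
    ext μ
    rcases lt_trichotomy μ x with h | rfl | h
    · simp [h, h.ne, h.asymm, em']
    · simp [hxI]
    · simp [h, h.ne', em']
  refine ⟨_, hS ▸ hcut, ?_, ?_⟩
  · have := Finset.card_erase_add_one hI
    grw [Finset.card_insert_le, Finset.card_insert_le]
    omega
  · simp only [Finset.mem_insert]
    rintro K (rfl | rfl | hK)
    · exact ⟨I, hI, inter_subset_left⟩
    · exact ⟨I, hI, inter_subset_left⟩
    · exact ⟨K, Finset.mem_of_mem_erase hK, subset_rfl⟩

theorem exists_refinement (hP : IsIntervalPartition P univ) (hJ : J.OrdConnected) :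
    ∃ Q : Finset (Set α), IsIntervalPartition Q univ ∧ Q.card ≤ P.card + 2 ∧
      ∀ K ∈ Q, K ⊆ J ∨ ∃ I ∈ P, K ⊆ I \ J := by
  classical
  rcases J.eq_empty_or_nonempty with rfl | ⟨x, hxJ⟩
  · exact ⟨P, hP, by omega, fun K hK => Or.inr ⟨K, hK, by simp⟩⟩
  -- Puncturing at `x ∈ J` makes every piece miss a point of `J`, so removing `J` keeps it an
  -- interval.
  obtain ⟨P₀, hP₀, hcard, hP₀P⟩ := hP.exists_puncture x
  have hP₀J : ∀ K ∈ P₀, ∃ y ∈ J, y ∉ K := fun K hK =>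
    ⟨x, hxJ, fun hxK => hP₀.subset_of_mem hK hxK rfl⟩
  have hQ := (hP₀.image_diff hJ hP₀J).insert hJ disjoint_sdiff_left
  have hS : {x}ᶜ \ J ∪ J = univ := by
    ext μ
    by_cases h : μ = x <;> simp [h, hxJ]
  rw [hS] at hQ
  refine ⟨_, hQ, ?_, ?_⟩
  · grw [Finset.card_insert_le, Finset.card_image_le]
    omega
  · simp only [Finset.mem_insert, Finset.mem_image]
    rintro K (rfl | ⟨K₀, hK₀, rfl⟩)
    · exact Or.inl subset_rfl
    · obtain ⟨I, hI, hK₀I⟩ := hP₀P K₀ hK₀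
      exact Or.inr ⟨I, hI, sdiff_subset_sdiff_left hK₀I⟩

end IsIntervalPartition

end LinearOrder

theorem exists_intervalPartition_isMinOn {ι : Type*} [LinearOrder ι] (g : ι → ℝ → ℝ)
    (hg : ∀ ⦃s t⦄, s < t → ConvexOn ℝ univ fun μ => g s μ - g t μ) (S : Finset ι)
    (hS : S.Nonempty) :
    ∃ P : Finset (Set ℝ), IsIntervalPartition P univ ∧ P.card + 1 ≤ 2 * S.card ∧
      ∀ I ∈ P, ∃ t ∈ S, ∀ μ ∈ I, IsMinOn (g · μ) S t := by
  classical
  induction S using Finset.induction_on_min with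
  | empty => exact absurd hS Finset.not_nonempty_empty
  | insert a s has ih =>
    rcases s.eq_empty_or_nonempty with rfl | hs
    · exact ⟨{univ}, ⟨by simp [ordConnected_univ], by simp, by simp⟩, by simp,
        fun I _ => ⟨a, by simp, fun μ _ => by simp [isMinOn_iff]⟩⟩
    obtain ⟨P, hP, hcard, hmin⟩ := ih hs
    set J := {μ | ∀ t ∈ s, g a μ ≤ g t μ}
    have hJ : J.OrdConnected := by
      have hJ_eq : J = ⋂ t ∈ s, {μ | μ ∈ univ ∧ g a μ - g t μ ≤ 0} := by ext; simp [J]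
      rw [← convex_iff_ordConnected, hJ_eq]
      exact convex_iInter₂ fun t ht => (hg (has t ht)).convex_le 0
    obtain ⟨Q, hQ, hQcard, hQP⟩ := hP.exists_refinement hJ
    refine ⟨Q, hQ, ?_, fun K hK => ?_⟩
    · rw [Finset.card_insert_of_notMem fun h => (has a h).false]
      omega
    simp only [isMinOn_iff, Finset.coe_insert, forall_mem_insert]
    rcases hQP K hK with hKJ | ⟨I, hI, hKI⟩
    · exact ⟨a, Finset.mem_insert_self a s, fun μ hμ => ⟨le_rfl, hKJ hμ⟩⟩
    obtain ⟨t, ht, htmin⟩ := hmin I hI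
    refine ⟨t, Finset.mem_insert_of_mem ht, fun μ hμ => ?_⟩
    obtain ⟨hμI, hμJ⟩ := hKI hμ
    obtain ⟨t', ht', hlt⟩ : ∃ t' ∈ s, g t' μ < g a μ := by simpa [J] using hμJ
    have htμ := isMinOn_iff.1 (htmin μ hμI)
    exact ⟨(htμ t' ht').trans hlt.le, htμ⟩

theorem convexOn_finset_sum {ι : Type*} {f : ι → ℝ → ℝ} (hf : ∀ j, ConvexOn ℝ univ (f j))
    (F : Finset ι) : ConvexOn ℝ univ fun μ => ∑ j ∈ F, f j μ := by
  classical
  induction F using Finset.induction_on with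
  | empty => simpa using convexOn_const (0 : ℝ) convex_univ
  | insert j F hj ih =>
    simp only [Finset.sum_insert hj]
    exact (hf j).add ih

theorem convexOn_branch_sub_branch {n : ℕ} (u : ℕ → ℝ) {f : ℕ → ℝ → ℝ}
    (hf : ∀ j, ConvexOn ℝ univ (f j)) {s t : ℕ} (hst : s ≤ t) :
    ConvexOn ℝ univ fun μ => branch n u f s μ - branch n u f t μ := by
  have hsplit : (fun μ => branch n u f s μ - branch n u f t μ) =
      fun μ => (u s - u t) + ∑ j ∈ Finset.Ioc s n \ Finset.Ioc t n, f j μ := by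
    ext μ
    rw [branch, branch, ← Finset.sum_sdiff (Finset.Ioc_subset_Ioc_left hst)]
    ring
  rw [hsplit]
  exact (convexOn_const _ convex_univ).add (convexOn_finset_sum hf _)

/-- Every `B ∈ 𝓑_n` (a pointwise minimum of `n` telescoping branches with convex
increments) admits a finite partition of `ℝ` into intervals on each of which `B`
coincides with a single branch, with at most `2n - 1` pieces. -/
theorem order_le_two_rank_sub_one (n : ℕ) (hn : 1 ≤ n) (u : ℕ → ℝ) (f : ℕ → ℝ → ℝ)
    (hconv : ∀ j : ℕ, ConvexOn ℝ Set.univ (f j)) :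
    ∃ P : Finset (Set ℝ), P.card ≤ 2 * n - 1 ∧
      (∀ I ∈ P, Convex ℝ I) ∧
      ((↑P : Set (Set ℝ)).PairwiseDisjoint id) ∧
      ⋃₀ (↑P : Set (Set ℝ)) = Set.univ ∧
      ∀ I ∈ P, ∃ t : ℕ, 1 ≤ t ∧ t ≤ n ∧ ∀ μ ∈ I,
        sInf {x : ℝ | ∃ s : ℕ, 1 ≤ s ∧ s ≤ n ∧ x = branch n u f s μ} =
          branch n u f t μ := by
  obtain ⟨P, hP, hcard, hmin⟩ := exists_intervalPartition_isMinOn (branch n u f)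
    (fun _ _ hst => convexOn_branch_sub_branch u hconv hst.le) (Finset.Icc 1 n)
    ⟨1, Finset.mem_Icc.2 ⟨le_rfl, hn⟩⟩
  rw [Nat.card_Icc, Nat.add_sub_cancel] at hcard
  refine ⟨P, by omega, fun I hI => convex_iff_ordConnected.2 (hP.ordConnected I hI),
    hP.pairwiseDisjoint, hP.sUnion_eq, fun I hI => ?_⟩
  obtain ⟨t, ht, htmin⟩ := hmin I hI
  rw [Finset.mem_Icc] at ht
  refine ⟨t, ht.1, ht.2, fun μ hμ => IsLeast.csInf_eq ⟨⟨t, ht.1, ht.2, rfl⟩, ?_⟩⟩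
  rintro _ ⟨s, hs₁, hs₂, rfl⟩
  exact isMinOn_iff.1 (htmin μ hμ) s (Finset.mem_Icc.2 ⟨hs₁, hs₂⟩)
end

section
/- Correctness of the parametric recursion: with H_{k,t}(μ) = min over segmentations m of {1,...,t} into k segments of (∑_{r ∈ m, r ≠ last} c_r + ∑_{i ∈ last segment of m} γ(Y_i)(μ)), one has C_{k,t} = min_{μ ∈ ℝ} H_{k,t}(μ) (assuming the minimum in μ is attained), and H_{k,t+1}(μ) = min(H_{k,t}(μ), C_{k-1,t}) + γ(Y_{t+1})(μ) for t ≥ k. -/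
/-- Optimal cost of segment `[a, b)`: `c_{[a,b)} = min_μ ∑_{i=a}^{b-1} γ(Y_i)(μ)`. -/
noncomputable def segCost {A : Type*} (Y : ℕ → A) (γ : A → ℝ → ℝ) (a b : ℕ) : ℝ :=
  ⨅ μ : ℝ, ∑ i ∈ Finset.Ico a b, γ (Y i) μ

/-- `C_{k,t}`: optimal `k`-segment cost of `{1,…,t}`. -/
noncomputable def optCost {A : Type*} (Y : ℕ → A) (γ : A → ℝ → ℝ) (k t : ℕ) : ℝ :=
  sInf {x : ℝ | ∃ τ : ℕ → ℕ, τ 0 = 1 ∧ τ k = t + 1 ∧ StrictMonoOn τ (Set.Iic k) ∧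
    x = ∑ j ∈ Finset.range k, segCost Y γ (τ j) (τ (j + 1))}

/-- `H_{k,t}(μ)`: minimum over `k`-segment segmentations of `{1,…,t}` of the sum of the
optimal costs of the first `k-1` segments plus the loss of the last segment at parameter `μ`. -/
noncomputable def paramCost {A : Type*} (Y : ℕ → A) (γ : A → ℝ → ℝ) (k t : ℕ) (μ : ℝ) : ℝ :=
  sInf {x : ℝ | ∃ τ : ℕ → ℕ, τ 0 = 1 ∧ τ k = t + 1 ∧ StrictMonoOn τ (Set.Iic k) ∧
    x = (∑ j ∈ Finset.range (k - 1), segCost Y γ (τ j) (τ (j + 1))) +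
      ∑ i ∈ Finset.Ico (τ (k - 1)) (τ k), γ (Y i) μ}

/-!
All minima range over finitely many segmentations, so they are attained. Minimising over `μ`
and over segmentations commute, and minimising the loss of the last segment over `μ` gives its
optimal cost; this yields `C_{k,t} = min_μ H_{k,t}(μ)`. For the recursion, removing `t + 1` from
a segmentation of `{1, …, t + 1}` either shortens its last segment or, when that segment is
`{t + 1}`, leaves a `(k - 1)`-segmentation of `{1, …, t}`; conversely both can be extended back,
and either way the last-segment loss changes by exactly `γ(Y_{t+1})(μ)`.
-/

open Finset Function

-- `min_τ min_μ G μ τ = min_μ min_τ G μ τ`, in `IsLeast` form.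
lemma isLeast_range_of_isLeast_image_comm {ι κ β : Type*} [PartialOrder β] {S : Set ι}
    {G : κ → ι → β} {F : ι → β} {H : κ → β} {c : β}
    (hF : ∀ τ ∈ S, IsLeast (Set.range (G · τ)) (F τ))
    (hH : ∀ μ, IsLeast (G μ '' S) (H μ))
    (hc : IsLeast (F '' S) c) : IsLeast (Set.range H) c := by
  have hlower : ∀ μ, c ≤ H μ := fun μ => by
    obtain ⟨τ, hτ, hHμ⟩ := (hH μ).1
    exact hHμ ▸ (hc.2 ⟨τ, hτ, rfl⟩).trans ((hF τ hτ).2 ⟨μ, rfl⟩)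
  obtain ⟨τ, hτ, rfl⟩ := hc.1
  obtain ⟨μ, hμ⟩ := (hF τ hτ).1
  refine ⟨⟨μ, le_antisymm ?_ (hlower μ)⟩, by rintro _ ⟨μ', rfl⟩; exact hlower μ'⟩
  exact hμ ▸ (hH μ).2 ⟨τ, hτ, rfl⟩

section Segmentations

def IsSegmentation (k T : ℕ) (τ : ℕ → ℕ) : Prop :=
  τ 0 = 1 ∧ τ k = T ∧ StrictMonoOn τ (Set.Iic k)

namespace IsSegmentation

variable {m T : ℕ} {τ : ℕ → ℕ}

lemma lt_last (hτ : IsSegmentation (m + 1) T τ) : τ m < T :=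
  hτ.2.1 ▸ hτ.2.2 (Set.mem_Iic.2 m.le_succ) (Set.mem_Iic.2 le_rfl) m.lt_succ_self

lemma truncate (hτ : IsSegmentation (m + 1) T τ) : IsSegmentation m (τ m) τ :=
  ⟨hτ.1, rfl, hτ.2.2.mono (Set.Iic_subset_Iic.2 m.le_succ)⟩

lemma extend (hτ : IsSegmentation m T τ) {v : ℕ} (hv : T < v) :
    IsSegmentation (m + 1) v (update τ (m + 1) v) := by
  obtain ⟨h0, hm, hmono⟩ := hτ
  refine ⟨by rw [update_of_ne (by omega), h0], update_self .., ?_⟩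
  intro i hi j hj hij
  simp only [Set.mem_Iic] at hi hj
  rw [update_of_ne (by omega)]
  rcases eq_or_lt_of_le hj with rfl | hj
  · rw [update_self]
    exact (hmono.monotoneOn (Set.mem_Iic.2 (by omega)) (Set.mem_Iic.2 le_rfl) (by omega)).trans_lt
      (hm ▸ hv)
  · rw [update_of_ne (by omega)]
    exact hmono (Set.mem_Iic.2 (by omega)) (Set.mem_Iic.2 (by omega)) hij

end IsSegmentation

lemma exists_isSegmentation {k T : ℕ} (hk : 1 ≤ k) (hT : k < T) :
    ∃ τ, IsSegmentation k T τ := by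
  refine ⟨fun j => if j = k then T else j + 1, by simp; omega, by simp, ?_⟩
  intro i hi j hj hij
  simp only [Set.mem_Iic] at hi hj
  dsimp only
  split_ifs <;> omega

lemma finite_image_segmentations {β : Type*} {F : (ℕ → ℕ) → β} (k T : ℕ)
    (hF : ∀ σ τ, Set.EqOn σ τ (Set.Iic k) → F σ = F τ) :
    (F '' {τ | IsSegmentation k T τ}).Finite := by
  refine (Set.finite_range fun v : Fin (k + 1) → Fin (T + 1) =>
    F fun j => if h : j < k + 1 then (v ⟨j, h⟩ : ℕ) else 0).subset ?_
  rintro _ ⟨τ, ⟨-, hk, hmono⟩, rfl⟩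
  have hle : ∀ i ≤ k, τ i < T + 1 := fun i hi =>
    Nat.lt_succ_of_le (hk ▸ hmono.monotoneOn (Set.mem_Iic.2 hi) (Set.mem_Iic.2 le_rfl) hi)
  refine ⟨fun i => ⟨τ i, hle i (Nat.le_of_lt_succ i.isLt)⟩, hF _ _ fun j hj => ?_⟩
  simp [Nat.lt_succ_of_le (Set.mem_Iic.1 hj)]

lemma isLeast_sInf_image_segmentations {F : (ℕ → ℕ) → ℝ} {k T : ℕ}
    (hk : 1 ≤ k) (hT : k < T)
    (hF : ∀ σ τ, Set.EqOn σ τ (Set.Iic k) → F σ = F τ) :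
    IsLeast (F '' {τ | IsSegmentation k T τ}) (sInf (F '' {τ | IsSegmentation k T τ})) := by
  have hfin := finite_image_segmentations k T hF
  obtain ⟨τ, hτ⟩ := exists_isSegmentation hk hT
  exact ⟨(Set.Nonempty.image F ⟨τ, hτ⟩).csInf_mem hfin,
    fun _ hx => csInf_le hfin.bddBelow hx⟩

end Segmentations

section Costs

variable {A : Type*} (Y : ℕ → A) (γ : A → ℝ → ℝ)

noncomputable def segmentationCost (k : ℕ) (τ : ℕ → ℕ) : ℝ :=
  ∑ j ∈ range k, segCost Y γ (τ j) (τ (j + 1))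

/-- `H`-cost of a segmentation into `m + 1` segments (`m = k - 1` in `paramCost`). -/
noncomputable def paramSegmentationCost (m : ℕ) (μ : ℝ) (τ : ℕ → ℕ) : ℝ :=
  segmentationCost Y γ m τ + ∑ i ∈ Ico (τ m) (τ (m + 1)), γ (Y i) μ

lemma optCost_eq_sInf_image (k t : ℕ) :
    optCost Y γ k t = sInf (segmentationCost Y γ k '' {τ | IsSegmentation k (t + 1) τ}) := by
  unfold optCost
  congr 1
  ext x
  simp [IsSegmentation, segmentationCost, and_assoc, eq_comm]

lemma paramCost_succ_eq_sInf_image (m t : ℕ) (μ : ℝ) :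
    paramCost Y γ (m + 1) t μ =
      sInf (paramSegmentationCost Y γ m μ '' {τ | IsSegmentation (m + 1) (t + 1) τ}) := by
  unfold paramCost
  congr 1
  ext x
  simp [IsSegmentation, paramSegmentationCost, segmentationCost, and_assoc, eq_comm]

lemma isLeast_optCost {k t : ℕ} (hk : 1 ≤ k) (ht : k ≤ t) :
    IsLeast (segmentationCost Y γ k '' {τ | IsSegmentation k (t + 1) τ}) (optCost Y γ k t) := by
  rw [optCost_eq_sInf_image]
  refine isLeast_sInf_image_segmentations hk (by omega) fun σ τ h => sum_congr rfl fun j hj => ?_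
  rw [mem_range] at hj
  rw [h (Set.mem_Iic.2 hj.le), h (Set.mem_Iic.2 hj)]

lemma isLeast_paramCost {m t : ℕ} (ht : m + 1 ≤ t) (μ : ℝ) :
    IsLeast (paramSegmentationCost Y γ m μ '' {τ | IsSegmentation (m + 1) (t + 1) τ})
      (paramCost Y γ (m + 1) t μ) := by
  rw [paramCost_succ_eq_sInf_image]
  refine isLeast_sInf_image_segmentations m.succ_pos (by omega) fun σ τ h => ?_
  have hσ : ∀ j ≤ m + 1, σ j = τ j := fun j hj => h (Set.mem_Iic.2 hj)
  simp only [paramSegmentationCost, segmentationCost, hσ m m.le_succ, hσ (m + 1) le_rfl]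
  congr 1
  refine sum_congr rfl fun j hj => ?_
  rw [mem_range] at hj
  rw [hσ j (by omega), hσ (j + 1) (by omega)]

lemma isLeast_segCost {a b : ℕ}
    (h : ∃ μ, ∀ ν, ∑ i ∈ Ico a b, γ (Y i) μ ≤ ∑ i ∈ Ico a b, γ (Y i) ν) :
    IsLeast (Set.range fun μ => ∑ i ∈ Ico a b, γ (Y i) μ) (segCost Y γ a b) := by
  obtain ⟨μ, hμ⟩ := h
  have hleast : IsLeast (Set.range fun ν => ∑ i ∈ Ico a b, γ (Y i) ν)
      (∑ i ∈ Ico a b, γ (Y i) μ) :=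
    ⟨⟨μ, rfl⟩, by rintro _ ⟨ν, rfl⟩; exact hμ ν⟩
  rw [show segCost Y γ a b = _ from hleast.csInf_eq]
  exact hleast

lemma isLeast_paramSegmentationCost
    (hattain : ∀ a b : ℕ, ∃ μ : ℝ, ∀ ν : ℝ,
      ∑ i ∈ Ico a b, γ (Y i) μ ≤ ∑ i ∈ Ico a b, γ (Y i) ν)
    (m : ℕ) (τ : ℕ → ℕ) :
    IsLeast (Set.range fun μ => paramSegmentationCost Y γ m μ τ)
      (segmentationCost Y γ (m + 1) τ) := by
  have := (monotone_id.const_add (segmentationCost Y γ m τ)).map_isLeast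
    (isLeast_segCost Y γ (hattain (τ m) (τ (m + 1))))
  rw [← Set.range_comp] at this
  rwa [segmentationCost, sum_range_succ]

lemma segmentationCost_update (m v : ℕ) (τ : ℕ → ℕ) :
    segmentationCost Y γ m (update τ (m + 1) v) = segmentationCost Y γ m τ :=
  sum_congr rfl fun j hj => by
    rw [mem_range] at hj
    rw [update_of_ne (by omega), update_of_ne (by omega)]

lemma paramSegmentationCost_update (m v : ℕ) (μ : ℝ) (τ : ℕ → ℕ) :
    paramSegmentationCost Y γ m μ (update τ (m + 1) v) =
      segmentationCost Y γ m τ + ∑ i ∈ Ico (τ m) v, γ (Y i) μ := by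
  rw [paramSegmentationCost, segmentationCost_update, update_self, update_of_ne (by omega)]

lemma image_paramSegmentationCost_succ (m t : ℕ) (μ : ℝ) :
    paramSegmentationCost Y γ m μ '' {τ | IsSegmentation (m + 1) (t + 1 + 1) τ} =
      (· + γ (Y (t + 1)) μ) ''
        (paramSegmentationCost Y γ m μ '' {τ | IsSegmentation (m + 1) (t + 1) τ} ∪
          segmentationCost Y γ m '' {τ | IsSegmentation m (t + 1) τ}) := by
  ext x
  constructor
  · rintro ⟨τ, hτ, rfl⟩
    have hτm := hτ.lt_last
    have hsplit : paramSegmentationCost Y γ m μ τ =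
        paramSegmentationCost Y γ m μ (update τ (m + 1) (t + 1)) + γ (Y (t + 1)) μ := by
      rw [paramSegmentationCost_update, paramSegmentationCost, hτ.2.1,
        sum_Ico_succ_top (by omega), add_assoc]
    rcases (Nat.lt_succ_iff.1 hτm).lt_or_eq with hlt | heq
    · exact ⟨_, Or.inl ⟨_, hτ.truncate.extend hlt, rfl⟩, hsplit.symm⟩
    · refine ⟨_, Or.inr ⟨τ, heq ▸ hτ.truncate, rfl⟩, ?_⟩
      rw [hsplit, paramSegmentationCost_update, heq, Ico_self, sum_empty, add_zero]
  · rintro ⟨_, ⟨τ, hτ, rfl⟩ | ⟨σ, hσ, rfl⟩, rfl⟩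
    · have hτm := hτ.lt_last
      refine ⟨update τ (m + 1) (t + 1 + 1), hτ.truncate.extend (by omega), ?_⟩
      rw [paramSegmentationCost_update, paramSegmentationCost, hτ.2.1,
        sum_Ico_succ_top (by omega), ← add_assoc]
    · refine ⟨update σ (m + 1) (t + 1 + 1), hσ.extend (by omega), ?_⟩
      rw [paramSegmentationCost_update, hσ.2.1, sum_Ico_succ_top le_rfl, Ico_self, sum_empty,
        zero_add]

end Costs

/-- Correctness of the parametric recursion: `C_{k,t} = min_μ H_{k,t}(μ)`, and
`H_{k,t+1}(μ) = min (H_{k,t}(μ)) (C_{k-1,t}) + γ(Y_{t+1})(μ)` for `t ≥ k`. -/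
theorem parametric_correctness {A : Type*} (Y : ℕ → A) (γ : A → ℝ → ℝ)
    (hattain : ∀ a b : ℕ, ∃ μ : ℝ, ∀ ν : ℝ,
      ∑ i ∈ Finset.Ico a b, γ (Y i) μ ≤ ∑ i ∈ Finset.Ico a b, γ (Y i) ν)
    (k t : ℕ) (hk : 2 ≤ k) (ht : k ≤ t) :
    optCost Y γ k t = sInf (Set.range fun μ : ℝ => paramCost Y γ k t μ) ∧
    ∀ μ : ℝ, paramCost Y γ k (t + 1) μ =
      min (paramCost Y γ k t μ) (optCost Y γ (k - 1) t) + γ (Y (t + 1)) μ := by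
  obtain ⟨m, rfl⟩ : ∃ m, k = m + 1 := ⟨k - 1, by omega⟩
  refine ⟨?_, fun μ => ?_⟩
  · exact (isLeast_range_of_isLeast_image_comm
      (fun τ _ => isLeast_paramSegmentationCost Y γ hattain m τ) (isLeast_paramCost Y γ ht)
      (isLeast_optCost Y γ m.succ_pos ht)).csInf_eq.symm
  · have hrec := Monotone.map_isLeast (f := (· + γ (Y (t + 1)) μ))
      (fun _ _ h => add_le_add_left h _)
      ((isLeast_paramCost Y γ ht μ).union
        (isLeast_optCost Y γ (t := t) (by omega : 1 ≤ m) (by omega)))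
    rw [← image_paramSegmentationCost_succ] at hrec
    rw [Nat.add_sub_cancel]
    exact (isLeast_paramCost Y γ (by omega) μ).unique hrec
end
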